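/- arXiv:2203.03180 — 2 statements merged into one kernel-verified Lean document; each statement's English description precedes it below -/
import Mathlib

section
/- Suppose ‖δ - μ_gp‖ ≤ ‖β‖·‖σ‖ and the stability constraint 2 eᵀPB μ_qp + (eᵀPe)/ε + 2‖eᵀPB‖·‖β‖·‖σ‖ ≤ 0 holds, where ε > 0, P is symmetric positive definite, AᵀP + PA = -Q with Q positive definite, and e ≠ 0. Then along the dynamics ė = Ae + B(μ_qp - μ_gp + δ), the Lyapunov function V(e) = eᵀPe satisfies V̇(e) + V(e)/ε < 0. -/
/-!
Split the input as `μqp - μgp + δ = μqp + (δ - μgp)`. The Lyapunov equation turns the drift term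
`2 eᵀPAe` into `-eᵀQe < 0`, Cauchy–Schwarz together with the bound on `δ - μgp` dominates the
disturbance term `2 (eᵀPB)(δ - μgp)` by `2 ‖eᵀPB‖ ‖β‖ ‖σ‖`, and what is left is the left-hand side
of the constraint, which is `≤ 0`.
-/

open Matrix

/-- Euclidean norm of a finite real vector. -/
noncomputable def euclNorm {n : ℕ} (v : Fin n → ℝ) : ℝ :=
  ‖(WithLp.equiv 2 (Fin n → ℝ)).symm v‖

lemma dotProduct_le_euclNorm_mul_euclNorm {n : ℕ} (u v : Fin n → ℝ) :
    u ⬝ᵥ v ≤ euclNorm u * euclNorm v := by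
  have hinner : inner ℝ ((WithLp.equiv 2 (Fin n → ℝ)).symm u)
      ((WithLp.equiv 2 (Fin n → ℝ)).symm v) = u ⬝ᵥ v := by
    simp [EuclideanSpace.inner_eq_star_dotProduct, dotProduct, mul_comm]
  exact hinner ▸ real_inner_le_norm _ _

namespace Matrix

variable {ι R : Type*} [Fintype ι] [CommRing R]

lemma IsSymm.two_mul_dotProduct_mulVec_mulVec_of_lyapunov {A P Q : Matrix ι ι R}
    (hP : P.IsSymm) (hLyap : Aᵀ * P + P * A = -Q) (e : ι → R) :
    2 * (e ⬝ᵥ P *ᵥ (A *ᵥ e)) = -(e ⬝ᵥ Q *ᵥ e) := by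
  have hAP : Aᵀ * P = (P * A)ᵀ := by rw [transpose_mul, hP.eq]
  have hquad : e ⬝ᵥ (Aᵀ * P + P * A) *ᵥ e = 2 * (e ⬝ᵥ (P * A) *ᵥ e) := by
    rw [add_mulVec, dotProduct_add, hAP, dotProduct_transpose_mulVec, two_mul]
  rw [mulVec_mulVec, ← hquad, hLyap, neg_mulVec, dotProduct_neg]

end Matrix

theorem clf_constraint_implies_decrease_general
    (n : ℕ) (A P Q : Matrix (Fin (2 * n)) (Fin (2 * n)) ℝ)
    (B : Matrix (Fin (2 * n)) (Fin n) ℝ)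
    (hPsymm : P.IsSymm) (hQ : Q.PosDef)
    (hLyap : Aᵀ * P + P * A = -Q)
    (μqp μgp δ β σ : Fin n → ℝ) (e : Fin (2 * n) → ℝ) (he : e ≠ 0)
    (ε : ℝ)
    (hdist : euclNorm (δ - μgp) ≤ euclNorm β * euclNorm σ)
    (hconstraint : 2 * (Matrix.vecMul e (P * B) ⬝ᵥ μqp) + (e ⬝ᵥ P.mulVec e) / ε +
      2 * euclNorm (Matrix.vecMul e (P * B)) * euclNorm β * euclNorm σ ≤ 0) :
    2 * (e ⬝ᵥ P.mulVec (A.mulVec e + B.mulVec (μqp - μgp + δ))) +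
      (e ⬝ᵥ P.mulVec e) / ε < 0 := by
  set w := e ᵥ* (P * B)
  have hdrift := hPsymm.two_mul_dotProduct_mulVec_mulVec_of_lyapunov hLyap e
  have hQe : 0 < e ⬝ᵥ Q *ᵥ e := by simpa using hQ.dotProduct_mulVec_pos he
  have hsplit : e ⬝ᵥ P *ᵥ (A *ᵥ e + B *ᵥ (μqp - μgp + δ)) =
      e ⬝ᵥ P *ᵥ (A *ᵥ e) + w ⬝ᵥ μqp + w ⬝ᵥ (δ - μgp) := by
    have hB : ∀ v, e ⬝ᵥ P *ᵥ (B *ᵥ v) = w ⬝ᵥ v := fun v => by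
      rw [mulVec_mulVec, dotProduct_mulVec]
    rw [show μqp - μgp + δ = μqp + (δ - μgp) by abel]
    simp only [mulVec_add, dotProduct_add, hB, add_assoc]
  have hdisturbance : w ⬝ᵥ (δ - μgp) ≤ euclNorm w * (euclNorm β * euclNorm σ) :=
    (dotProduct_le_euclNorm_mul_euclNorm w _).trans
      (mul_le_mul_of_nonneg_left hdist (norm_nonneg _))
  rw [hsplit]
  linarith

theorem clf_constraint_implies_decrease
    (n : ℕ) (A P Q : Matrix (Fin (2 * n)) (Fin (2 * n)) ℝ)
    (B : Matrix (Fin (2 * n)) (Fin n) ℝ)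
    (hPsymm : P.IsSymm) (hP : P.PosDef) (hQ : Q.PosDef)
    (hLyap : Aᵀ * P + P * A = -Q)
    (μqp μgp δ β σ : Fin n → ℝ) (e : Fin (2 * n) → ℝ) (he : e ≠ 0)
    (ε : ℝ) (hε : 0 < ε)
    (hdist : euclNorm (δ - μgp) ≤ euclNorm β * euclNorm σ)
    (hconstraint : 2 * (Matrix.vecMul e (P * B) ⬝ᵥ μqp) + (e ⬝ᵥ P.mulVec e) / ε +
      2 * euclNorm (Matrix.vecMul e (P * B)) * euclNorm β * euclNorm σ ≤ 0) :
    2 * (e ⬝ᵥ P.mulVec (A.mulVec e + B.mulVec (μqp - μgp + δ))) +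
      (e ⬝ᵥ P.mulVec e) / ε < 0 :=
  clf_constraint_implies_decrease_general n A P Q B hPsymm hQ hLyap μqp μgp δ β σ e he ε hdist
    hconstraint
end

section
/- Let h : ℝ^m → ℝ be continuously differentiable and let x : [0,∞) → ℝ^m be a C¹ solution of a differential equation. Suppose γ : ℝ → ℝ is a locally Lipschitz, strictly increasing function with γ(0) = 0, and that d/dt h(x(t)) ≥ -γ(h(x(t))) for all t. If h(x(0)) ≥ 0, then h(x(t)) ≥ 0 for all t ≥ 0 (forward invariance of the safe set S = {x : h(x) ≥ 0}). -/
open Set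

/-- If `u t < 0`, then on `[T, t]`, where `T` is the last time before `t` with `0 ≤ u T`,
`u` would be strictly increasing from `u T ≥ 0` to `u t < 0`. -/
theorem nonneg_of_deriv_pos_of_neg {u : ℝ → ℝ} {a : ℝ} (hu : ContinuousOn u (Ici a))
    (ha : 0 ≤ u a) (hderiv : ∀ s, a < s → u s < 0 → 0 < deriv u s) :
    ∀ t, a ≤ t → 0 ≤ u t := by
  intro t hat
  by_contra! hneg
  have hcompact : IsCompact (Icc a t ∩ u ⁻¹' Ici 0) :=
    isCompact_Icc.of_isClosed_subset
      ((hu.mono Icc_subset_Ici_self).preimage_isClosed_of_isClosed isClosed_Icc isClosed_Ici)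
      inter_subset_left
  obtain ⟨T, ⟨⟨haT, hTt_le⟩, huT : 0 ≤ u T⟩, hT_last⟩ :=
    hcompact.exists_isGreatest ⟨a, ⟨le_rfl, hat⟩, ha⟩
  have hTt : T < t := hTt_le.lt_of_ne (by rintro rfl; exact (not_le.mpr hneg) huT)
  have hneg_after : ∀ s ∈ Ioc T t, u s < 0 := fun s hs => by
    by_contra! hs_nonneg
    exact (not_le.mpr hs.1) (hT_last ⟨⟨haT.trans hs.1.le, hs.2⟩, hs_nonneg⟩)
  have hmono : StrictMonoOn u (Icc T t) := by
    refine strictMonoOn_of_deriv_pos (convex_Icc T t)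
      (hu.mono fun s hs => haT.trans hs.1) fun s hs => ?_
    rw [interior_Icc] at hs
    exact hderiv s (haT.trans_lt hs.1) (hneg_after s (Ioo_subset_Ioc_self hs))
  linarith [hmono ⟨le_rfl, hTt.le⟩ ⟨hTt.le, le_rfl⟩ hTt]

theorem cbf_forward_invariance_general
    (m : ℕ) (h : (Fin m → ℝ) → ℝ) (hh : ContDiff ℝ 1 h)
    (x : ℝ → Fin m → ℝ) (hx : ContDiff ℝ 1 x)
    (γ : ℝ → ℝ) (hγmono : StrictMono γ) (hγ0 : γ 0 = 0)
    (hineq : ∀ t, 0 ≤ t → deriv (fun s => h (x s)) t ≥ -γ (h (x t)))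
    (h0 : 0 ≤ h (x 0)) :
    ∀ t, 0 ≤ t → 0 ≤ h (x t) := by
  refine nonneg_of_deriv_pos_of_neg (hh.comp hx).continuous.continuousOn h0 fun s hs hneg => ?_
  have hγneg : γ (h (x s)) < 0 := hγ0 ▸ hγmono hneg
  linarith [hineq s hs.le]

theorem cbf_forward_invariance
    (m : ℕ) (h : (Fin m → ℝ) → ℝ) (hh : ContDiff ℝ 1 h)
    (x : ℝ → Fin m → ℝ) (hx : ContDiff ℝ 1 x)
    (γ : ℝ → ℝ) (hγlip : LocallyLipschitz γ) (hγmono : StrictMono γ) (hγ0 : γ 0 = 0)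
    (hineq : ∀ t, 0 ≤ t → deriv (fun s => h (x s)) t ≥ -γ (h (x t)))
    (h0 : 0 ≤ h (x 0)) :
    ∀ t, 0 ≤ t → 0 ≤ h (x t) :=
  cbf_forward_invariance_general m h hh x hx γ hγmono hγ0 hineq h0
end
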